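/- arXiv:2110.13872 — 6 statements merged into one kernel-verified Lean document; each statement's English description precedes it below -/
import Mathlib

section
/- Let x and y be complex numbers of absolute value 1, and let a, b, c be integers. If the 3×3 matrix M with rows (1,1,1), (x^a, x^b, x^c), (y^a, y^b, y^c) has determinant zero, then M has either two proportional rows or two proportional columns. -/
open Matrix

theorem stmt_0 (x y : ℂ) (hx : ‖x‖ = 1) (hy : ‖y‖ = 1)
    (a b c : ℤ)
    (M : Matrix (Fin 3) (Fin 3) ℂ)
    (hM : M = !![1, 1, 1; x ^ a, x ^ b, x ^ c; y ^ a, y ^ b, y ^ c])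
    (hdet : M.det = 0) :
    (∃ i j : Fin 3, i ≠ j ∧ ∃ l : ℂ,
        (∀ k, M i k = l * M j k) ∨ (∀ k, M j k = l * M i k)) ∨
    (∃ i j : Fin 3, i ≠ j ∧ ∃ l : ℂ,
        (∀ k, M k i = l * M k j) ∨ (∀ k, M k j = l * M k i)) := by
  have hx0 : x ≠ 0 := fun h => by simp [h] at hx
  have hy0 : y ≠ 0 := fun h => by simp [h] at hy
  set s := x ^ (b - a) with hs
  set t := x ^ (c - a) with ht
  set u := y ^ (b - a) with hu
  set v := y ^ (c - a) with hv
  have hsne : s ≠ 0 := zpow_ne_zero _ hx0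
  have htne : t ≠ 0 := zpow_ne_zero _ hx0
  have hune : u ≠ 0 := zpow_ne_zero _ hy0
  have hvne : v ≠ 0 := zpow_ne_zero _ hy0
  have hxa : x ^ a ≠ 0 := zpow_ne_zero _ hx0
  have hya : y ^ a ≠ 0 := zpow_ne_zero _ hy0
  have h1 : x ^ b = x ^ a * s := by rw [hs, ← zpow_add₀ hx0]; congr 1; ring
  have h2 : x ^ c = x ^ a * t := by rw [ht, ← zpow_add₀ hx0]; congr 1; ring
  have h3 : y ^ b = y ^ a * u := by rw [hu, ← zpow_add₀ hy0]; congr 1; ring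
  have h4 : y ^ c = y ^ a * v := by rw [hv, ← zpow_add₀ hy0]; congr 1; ring
  have hdet' : M.det = x ^ a * y ^ a * ((s - 1) * (v - 1) - (t - 1) * (u - 1)) := by
    rw [hM]
    simp [Matrix.det_fin_three, h1, h2, h3, h4]
    ring
  have hkey : (s - 1) * (v - 1) = (t - 1) * (u - 1) := by
    rw [hdet'] at hdet
    rcases mul_eq_zero.mp hdet with h | h
    · exact absurd h (mul_ne_zero hxa hya)
    · exact sub_eq_zero.mp h
  have hconjx : ∀ n : ℤ, (starRingEnd ℂ) (x ^ n) = (x ^ n)⁻¹ := fun n => by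
    rw [map_zpow₀, ← Complex.inv_eq_conj hx, _root_.inv_zpow]
  have hconjy : ∀ n : ℤ, (starRingEnd ℂ) (y ^ n) = (y ^ n)⁻¹ := fun n => by
    rw [map_zpow₀, ← Complex.inv_eq_conj hy, _root_.inv_zpow]
  have hkey2 : (s⁻¹ - 1) * (v⁻¹ - 1) = (t⁻¹ - 1) * (u⁻¹ - 1) := by
    have h := congrArg (starRingEnd ℂ) hkey
    simpa [hs, ht, hu, hv, hconjx, hconjy, _root_.map_mul, map_sub] using h
  have hDeq : (s - 1) * (v - 1) * (t * u) = (t - 1) * (u - 1) * (s * v) := by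
    calc (s - 1) * (v - 1) * (t * u)
        = (s⁻¹ - 1) * (v⁻¹ - 1) * (s * v * (t * u)) := by field_simp; ring
      _ = (t⁻¹ - 1) * (u⁻¹ - 1) * (s * v * (t * u)) := by rw [hkey2]
      _ = (t - 1) * (u - 1) * (s * v) := by field_simp; ring
  have hsplit : (s - 1) * (v - 1) * (t * u - s * v) = 0 := by
    linear_combination hDeq - s * v * hkey
  rcases mul_eq_zero.mp hsplit with hD | hTU
  · have hD' : (t - 1) * (u - 1) = 0 := by rw [← hkey]; exact hD
    rcases mul_eq_zero.mp hD with hA | hA <;> rcases mul_eq_zero.mp hD' with hB | hB <;>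
      [skip; skip; skip; skip]
    · -- s = 1, t = 1 : rows 0,1
      have hs1 : s = 1 := by linear_combination hA
      have ht1 : t = 1 := by linear_combination hB
      refine Or.inl ⟨1, 0, by decide, x ^ a, Or.inl fun k => ?_⟩
      fin_cases k <;> simp [hM, h1, h2, hs1, ht1]
    · -- s = 1, u = 1 : cols 0,1
      have hs1 : s = 1 := by linear_combination hA
      have hu1 : u = 1 := by linear_combination hB
      refine Or.inr ⟨0, 1, by decide, 1, Or.inl fun k => ?_⟩
      fin_cases k <;> simp [hM, h1, h3, hs1, hu1]
    · -- v = 1, t = 1 : cols 0,2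
      have hv1 : v = 1 := by linear_combination hA
      have ht1 : t = 1 := by linear_combination hB
      refine Or.inr ⟨0, 2, by decide, 1, Or.inl fun k => ?_⟩
      fin_cases k <;> simp [hM, h2, h4, hv1, ht1]
    · -- v = 1, u = 1 : rows 0,2
      have hv1 : v = 1 := by linear_combination hA
      have hu1 : u = 1 := by linear_combination hB
      refine Or.inl ⟨2, 0, by decide, y ^ a, Or.inl fun k => ?_⟩
      fin_cases k <;> simp [hM, h3, h4, hv1, hu1]
  · have hsum : s + v = t + u := by linear_combination -hkey - hTU
    have hquad : (s - t) * (s - u) = 0 := by linear_combination s * hsum + hTU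
    rcases mul_eq_zero.mp hquad with hE | hE
    · -- s = t, v = u : cols 1,2
      have hst : s = t := sub_eq_zero.mp hE
      have hvu : v = u := by linear_combination hsum - hst
      refine Or.inr ⟨1, 2, by decide, 1, Or.inl fun k => ?_⟩
      fin_cases k <;> simp [hM, h1, h2, h3, h4, hst, hvu]
    · -- s = u, v = t : rows 1,2
      have hsu : s = u := sub_eq_zero.mp hE
      have hvt : v = t := by linear_combination hsum - hsu
      refine Or.inl ⟨1, 2, by decide, x ^ a * (y ^ a)⁻¹, Or.inl fun k => ?_⟩
      fin_cases k <;> simp [hM, h1, h2, h3, h4, hsu, hvt] <;> field_simp <;> ring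
end

section
/- Let x be a complex number with |x| = 1 and let a, b, c be pairwise distinct integers. If the matrix with rows (1,1,1), (a,b,c), (x^a, x^b, x^c) is degenerate (determinant zero), then x^a = x^b = x^c, i.e., the first and third rows are proportional (in fact equal up to a common scalar x^a). -/
open Matrix ComplexConjugate

/-- No line meets the unit circle in three points. Since `conj u = u⁻¹` on the circle, conjugating
the relation gives `α v w + β u w + γ u v = 0`, and together the two force `γ (u - w) (v - w) = 0`. -/
theorem Complex.eq_and_eq_of_affine_relation_of_norm_eq_one {u v w : ℂ}
    (hu : ‖u‖ = 1) (hv : ‖v‖ = 1) (hw : ‖w‖ = 1) {α β γ : ℝ}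
    (hα : α ≠ 0) (hβ : β ≠ 0) (hγ : γ ≠ 0) (hsum : α + β + γ = 0)
    (hrel : (α : ℂ) * u + β * v + γ * w = 0) :
    u = v ∧ v = w := by
  have hu0 : u ≠ 0 := norm_ne_zero_iff.mp (by simp [hu])
  have hv0 : v ≠ 0 := norm_ne_zero_iff.mp (by simp [hv])
  have hw0 : w ≠ 0 := norm_ne_zero_iff.mp (by simp [hw])
  have hrel_inv : (α : ℂ) * u⁻¹ + β * v⁻¹ + γ * w⁻¹ = 0 := by
    simpa [Complex.inv_eq_conj, hu, hv, hw] using congrArg conj hrel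
  have hrel_quad : (α : ℂ) * v * w + β * u * w + γ * u * v = 0 := by
    field_simp at hrel_inv
    linear_combination hrel_inv
  have hsum' : (α : ℂ) + β + γ = 0 := by exact_mod_cast hsum
  have key : (γ : ℂ) * (u - w) * (v - w) = 0 := by
    linear_combination hrel_quad + w * hrel - (u + v) * w * hsum'
  have hγ' : (γ : ℂ) ≠ 0 := by exact_mod_cast hγ
  have hβ' : (β : ℂ) ≠ 0 := by exact_mod_cast hβ
  rcases mul_eq_zero.mp key with h | hvw
  · have huw : u = w := sub_eq_zero.mp ((mul_eq_zero.mp h).resolve_left hγ')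
    subst huw
    have : (β : ℂ) * (v - u) = 0 := by linear_combination hrel - u * hsum'
    have hvu : v = u := sub_eq_zero.mp ((mul_eq_zero.mp this).resolve_left hβ')
    exact ⟨hvu.symm, hvu⟩
  · have hvw : v = w := sub_eq_zero.mp hvw
    subst hvw
    have hα' : (α : ℂ) ≠ 0 := by exact_mod_cast hα
    have : (α : ℂ) * (u - v) = 0 := by linear_combination hrel - v * hsum'
    exact ⟨sub_eq_zero.mp ((mul_eq_zero.mp this).resolve_left hα'), rfl⟩

theorem stmt_1 (x : ℂ) (hx : ‖x‖ = 1) (a b c : ℤ)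
    (hab : a ≠ b) (hbc : b ≠ c) (hac : a ≠ c)
    (hdet : (!![1, 1, 1; (a : ℂ), (b : ℂ), (c : ℂ); x ^ a, x ^ b, x ^ c]).det = 0) :
    x ^ a = x ^ b ∧ x ^ b = x ^ c := by
  have hunit (n : ℤ) : ‖x ^ n‖ = 1 := by rw [norm_zpow, hx, _root_.one_zpow]
  refine Complex.eq_and_eq_of_affine_relation_of_norm_eq_one (hunit a) (hunit b) (hunit c)
    (α := c - b) (β := a - c) (γ := b - a) (sub_ne_zero.mpr (by exact_mod_cast hbc.symm))
    (sub_ne_zero.mpr (by exact_mod_cast hac))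
    (sub_ne_zero.mpr (by exact_mod_cast hab.symm)) (by ring) ?_
  simp only [det_fin_three, of_apply, cons_val', cons_val_zero, cons_val_one, cons_val,
    cons_val_fin_one] at hdet
  push_cast
  linear_combination hdet
end

section
/- Let x and y be complex numbers of absolute value 1 with x^a, x^b, x^c pairwise distinct and y^a, y^b, y^c pairwise distinct, for integers a, b, c. If (x^a − x^b)/(x^a − x^c) = (y^a − y^b)/(y^a − y^c), then x^b / x^c = y^b / y^c. -/
open ComplexConjugate

/- On the unit circle conjugation is inversion, so the ratio `r = (u - v) / (u - w)` satisfies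
`conj r = r * (w / v)`, i.e. `r / conj r = v / w` (the inscribed angle theorem). Hence a common
nonzero ratio for `x ^ a, x ^ b, x ^ c` and `y ^ a, y ^ b, y ^ c` forces `x ^ c / x ^ b = y ^ c / y ^ b`. -/

theorem Complex.conj_div_sub_div_sub_of_norm_eq_one {u v w : ℂ} (hu : ‖u‖ = 1) (hv : ‖v‖ = 1)
    (hw : ‖w‖ = 1) : conj ((u - v) / (u - w)) = (u - v) / (u - w) * (w / v) := by
  have hu0 : u ≠ 0 := norm_ne_zero_iff.mp (by simp [hu])
  have hv0 : v ≠ 0 := norm_ne_zero_iff.mp (by simp [hv])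
  have hw0 : w ≠ 0 := norm_ne_zero_iff.mp (by simp [hw])
  rw [map_div₀, map_sub, map_sub, ← Complex.inv_eq_conj hu, ← Complex.inv_eq_conj hv,
    ← Complex.inv_eq_conj hw]
  rcases eq_or_ne u w with rfl | huw
  · simp
  · have huw' : u - w ≠ 0 := sub_ne_zero.mpr huw
    field_simp
    ring

theorem stmt_2_general (x y : ℂ) (hx : ‖x‖ = 1) (hy : ‖y‖ = 1)
    (a b c : ℤ)
    (hy1 : y ^ a ≠ y ^ b) (hy2 : y ^ a ≠ y ^ c)
    (h : (x ^ a - x ^ b) / (x ^ a - x ^ c) = (y ^ a - y ^ b) / (y ^ a - y ^ c)) :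
    x ^ b / x ^ c = y ^ b / y ^ c := by
  have hxn (n : ℤ) : ‖x ^ n‖ = 1 := by rw [norm_zpow, hx, one_zpow]
  have hyn (n : ℤ) : ‖y ^ n‖ = 1 := by rw [norm_zpow, hy, one_zpow]
  have hconj := congrArg conj h
  rw [Complex.conj_div_sub_div_sub_of_norm_eq_one (hxn a) (hxn b) (hxn c),
    Complex.conj_div_sub_div_sub_of_norm_eq_one (hyn a) (hyn b) (hyn c), h] at hconj
  have hratio : (y ^ a - y ^ b) / (y ^ a - y ^ c) ≠ 0 :=
    div_ne_zero (sub_ne_zero.mpr hy1) (sub_ne_zero.mpr hy2)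
  simpa using congrArg (·⁻¹) (mul_left_cancel₀ hratio hconj)

theorem stmt_2 (x y : ℂ) (hx : ‖x‖ = 1) (hy : ‖y‖ = 1)
    (a b c : ℤ)
    (hx1 : x ^ a ≠ x ^ b) (hx2 : x ^ a ≠ x ^ c) (hx3 : x ^ b ≠ x ^ c)
    (hy1 : y ^ a ≠ y ^ b) (hy2 : y ^ a ≠ y ^ c) (hy3 : y ^ b ≠ y ^ c)
    (h : (x ^ a - x ^ b) / (x ^ a - x ^ c) = (y ^ a - y ^ b) / (y ^ a - y ^ c)) :
    x ^ b / x ^ c = y ^ b / y ^ c :=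
  stmt_2_general x y hx hy a b c hy1 hy2 h
end

section
/- Let M be a 3×n complex matrix all of whose entries are nonzero. Suppose that every 3×3 submatrix of M (obtained by choosing 3 columns) has either two proportional rows or two proportional columns. Then either M has two proportional rows, or the columns of M can be partitioned into at most two groups such that within each group all columns are mutually proportional. -/
/-!
Record each column `j` by the ratios `M k j / M (k + 1) j` of cyclically consecutive rows.
These three ratios multiply to `1`, so two columns agreeing in two of them agree in all three,
which happens exactly when the columns are proportional; and rows `k`, `k + 1` are proportional
on a set of columns exactly when the `k`-th ratio is constant there.

If there are three pairwise non-proportional columns, the hypothesis makes one ratio constant on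
them. A further column `j` not proportional to the first two forms another such triple with
them, and the ratio made constant must be the same one, for otherwise the first two columns
would agree in two ratios. So that ratio is constant on all columns and two rows are
proportional. Otherwise the columns fall into at most two proportionality classes.
-/

open Finset

theorem eq_of_prod_eq_of_forall_ne {ι G₀ : Type*} [Fintype ι] [DecidableEq ι]
    [CommGroupWithZero G₀] {x y : ι → G₀} (hx : ∀ i, x i ≠ 0)
    (hprod : ∏ i, x i = ∏ i, y i) {m : ι} (h : ∀ i ≠ m, x i = y i) : x = y := by
  have hcompl : ∏ i ∈ {m}ᶜ, x i = ∏ i ∈ {m}ᶜ, y i :=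
    prod_congr rfl fun i hi => h i (by simpa using hi)
  have hm : x m = y m := by
    rw [Fintype.prod_eq_mul_prod_compl m x, Fintype.prod_eq_mul_prod_compl m y, ← hcompl] at hprod
    exact mul_right_cancel₀ (prod_ne_zero_iff.2 fun i _ => hx i) hprod
  funext i
  obtain rfl | hi := eq_or_ne i m
  exacts [hm, h i hi]

theorem Fin.eq_of_prod_eq_of_eq_of_eq {G₀ : Type*} [CommGroupWithZero G₀]
    {x y : Fin 3 → G₀} (hx : ∀ i, x i ≠ 0) (hprod : ∏ i, x i = ∏ i, y i) {k k' : Fin 3}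
    (hkk' : k ≠ k') (hk : x k = y k) (hk' : x k' = y k') : x = y := by
  obtain ⟨m, hmk, hmk'⟩ : ∃ m : Fin 3, m ≠ k ∧ m ≠ k' :=
    (by decide : ∀ k k' : Fin 3, ∃ m : Fin 3, m ≠ k ∧ m ≠ k') k k'
  refine eq_of_prod_eq_of_forall_ne hx hprod (m := m) fun i hi => ?_
  obtain rfl | rfl : i = k ∨ i = k' := by omega
  exacts [hk, hk']

theorem Fin.eq_add_one_or_eq_add_one {i i' : Fin 3} (h : i ≠ i') : i' = i + 1 ∨ i = i' + 1 := by
  revert i i'; decide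

theorem exists_forall_apply_eq_of_triples {ι κ α : Type*} (g : ι → κ → α)
    (hpair : ∀ j j' k k', k ≠ k' → g j k = g j' k → g j k' = g j' k' → g j = g j')
    (htriple : ∀ j₁ j₂ j₃, g j₁ ≠ g j₂ → g j₁ ≠ g j₃ → g j₂ ≠ g j₃ →
      ∃ k, g j₁ k = g j₂ k ∧ g j₁ k = g j₃ k)
    {j₁ j₂ j₃ : ι} (h₁₂ : g j₁ ≠ g j₂) (h₁₃ : g j₁ ≠ g j₃) (h₂₃ : g j₂ ≠ g j₃) :
    ∃ k, ∀ j, g j k = g j₁ k := by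
  obtain ⟨k, hk₂, -⟩ := htriple j₁ j₂ j₃ h₁₂ h₁₃ h₂₃
  refine ⟨k, fun j => ?_⟩
  by_cases hj₁ : g j = g j₁
  · rw [hj₁]
  by_cases hj₂ : g j = g j₂
  · rw [hj₂, hk₂]
  obtain ⟨k', hk'₂, hk'⟩ := htriple j₁ j₂ j h₁₂ (Ne.symm hj₁) (Ne.symm hj₂)
  obtain rfl | hkk' := eq_or_ne k k'
  · exact hk'.symm
  · exact absurd (hpair j₁ j₂ k k' hkk' hk₂ hk'₂) h₁₂

theorem exists_two_classes_of_no_three_distinct {ι α : Type*} (g : ι → α)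
    (h : ∀ j₁ j₂ j₃, g j₁ ≠ g j₂ → g j₁ ≠ g j₃ → g j₂ = g j₃) :
    ∃ P : ι → Bool, ∀ j j', P j = P j' → g j = g j' := by
  classical
  rcases isEmpty_or_nonempty ι with hι | ⟨⟨j₀⟩⟩
  · exact ⟨fun _ => true, fun j => isEmptyElim j⟩
  refine ⟨fun j => decide (g j = g j₀), fun j j' hP => ?_⟩
  by_cases hj : g j = g j₀ <;> by_cases hj' : g j' = g j₀ <;> simp only [hj, hj', decide_true, decide_false,
    Bool.true_eq_false, Bool.false_eq_true] at hP
  · rw [hj, hj']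
  · exact h j₀ j j' (Ne.symm hj) (Ne.symm hj')

namespace Matrix

variable {K ι : Type*} [Field K] {M : Matrix (Fin 3) ι K}

def cyclicRowRatio (M : Matrix (Fin 3) ι K) (j : ι) (k : Fin 3) : K := M k j / M (k + 1) j

theorem cyclicRowRatio_ne_zero (hM : ∀ i j, M i j ≠ 0) (j : ι) (k : Fin 3) :
    M.cyclicRowRatio j k ≠ 0 :=
  div_ne_zero (hM _ _) (hM _ _)

theorem prod_cyclicRowRatio (hM : ∀ i j, M i j ≠ 0) (j : ι) : ∏ k, M.cyclicRowRatio j k = 1 := by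
  have := hM 0 j; have := hM 1 j; have := hM 2 j
  rw [Fin.prod_univ_three]
  change M 0 j / M 1 j * (M 1 j / M 2 j) * (M 2 j / M 0 j) = 1
  field_simp

theorem cyclicRowRatio_eq_of_eq_of_eq (hM : ∀ i j, M i j ≠ 0) {j j' : ι} {k k' : Fin 3}
    (hkk' : k ≠ k') (hk : M.cyclicRowRatio j k = M.cyclicRowRatio j' k)
    (hk' : M.cyclicRowRatio j k' = M.cyclicRowRatio j' k') :
    M.cyclicRowRatio j = M.cyclicRowRatio j' :=
  Fin.eq_of_prod_eq_of_eq_of_eq (cyclicRowRatio_ne_zero hM j)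
    (by rw [prod_cyclicRowRatio hM, prod_cyclicRowRatio hM]) hkk' hk hk'

theorem cyclicRowRatio_eq_iff (hM : ∀ i j, M i j ≠ 0) {j j' : ι} :
    M.cyclicRowRatio j = M.cyclicRowRatio j' ↔ ∃ l : K, ∀ i, M i j = l * M i j' := by
  constructor
  · intro h
    have hstep (k : Fin 3) : M k j / M k j' = M (k + 1) j / M (k + 1) j' :=
      (div_eq_div_iff_div_eq_div' (hM _ _) (hM _ _)).1 (congrFun h k)
    have hconst (i : Fin 3) : M i j / M i j' = M 0 j / M 0 j' := by
      fin_cases i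
      exacts [rfl, (hstep 0).symm, (hstep 1).symm.trans (hstep 0).symm]
    exact ⟨M 0 j / M 0 j', fun i => by rw [← hconst i, div_mul_cancel₀ _ (hM i j')]⟩
  · rintro ⟨l, hl⟩
    have hl0 : l ≠ 0 := left_ne_zero_of_mul (hl 0 ▸ hM 0 j)
    funext k
    simp only [cyclicRowRatio, hl, mul_div_mul_left _ _ hl0]

theorem exists_forall_cyclicRowRatio_eq_of_rows {κ : Type*} (hM : ∀ i j, M i j ≠ 0)
    {e : κ → ι} {a b : Fin 3} (hab : a ≠ b) {l : K} (hl : ∀ m, M a (e m) = l * M b (e m)) :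
    ∃ k c, ∀ m, M.cyclicRowRatio (e m) k = c := by
  rcases Fin.eq_add_one_or_eq_add_one hab with rfl | rfl
  · exact ⟨a, l, fun m => by rw [cyclicRowRatio, hl, mul_div_cancel_right₀ _ (hM _ _)]⟩
  · exact ⟨b, l⁻¹, fun m => by rw [cyclicRowRatio, hl, div_mul_cancel_right₀ (hM _ _)]⟩

theorem exists_cyclicRowRatio_eq_of_minors (hM : ∀ i j, M i j ≠ 0)
    (h : ∀ e : Fin 3 → ι, Function.Injective e →
      (∃ i i' : Fin 3, i ≠ i' ∧ ∃ l : K,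
          (∀ k : Fin 3, M i (e k) = l * M i' (e k)) ∨
          (∀ k : Fin 3, M i' (e k) = l * M i (e k))) ∨
      (∃ k k' : Fin 3, k ≠ k' ∧ ∃ l : K,
          (∀ i : Fin 3, M i (e k) = l * M i (e k')) ∨
          (∀ i : Fin 3, M i (e k') = l * M i (e k))))
    {j₁ j₂ j₃ : ι} (h₁₂ : M.cyclicRowRatio j₁ ≠ M.cyclicRowRatio j₂)
    (h₁₃ : M.cyclicRowRatio j₁ ≠ M.cyclicRowRatio j₃)
    (h₂₃ : M.cyclicRowRatio j₂ ≠ M.cyclicRowRatio j₃) :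
    ∃ k, M.cyclicRowRatio j₁ k = M.cyclicRowRatio j₂ k ∧
      M.cyclicRowRatio j₁ k = M.cyclicRowRatio j₃ k := by
  set e : Fin 3 → ι := ![j₁, j₂, j₃]
  have he : Function.Injective (M.cyclicRowRatio ∘ e) := by
    intro a b hab
    fin_cases a <;> fin_cases b <;> simp_all [e, eq_comm]
  rcases h e he.of_comp with ⟨i, i', hii', l, hl | hl⟩ | ⟨k, k', hkk', l, hl | hl⟩
  · obtain ⟨k, c, hc⟩ := exists_forall_cyclicRowRatio_eq_of_rows hM hii' hl
    exact ⟨k, (hc 0).trans (hc 1).symm, (hc 0).trans (hc 2).symm⟩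
  · obtain ⟨k, c, hc⟩ := exists_forall_cyclicRowRatio_eq_of_rows hM hii'.symm hl
    exact ⟨k, (hc 0).trans (hc 1).symm, (hc 0).trans (hc 2).symm⟩
  · exact absurd ((cyclicRowRatio_eq_iff hM).2 ⟨l, hl⟩) (he.ne hkk')
  · exact absurd ((cyclicRowRatio_eq_iff hM).2 ⟨l, hl⟩) (he.ne hkk'.symm)

end Matrix

open Matrix in
theorem stmt_3 (n : ℕ) (M : Matrix (Fin 3) (Fin n) ℂ)
    (hM : ∀ i j, M i j ≠ 0)
    (h : ∀ e : Fin 3 → Fin n, Function.Injective e →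
      (∃ i i' : Fin 3, i ≠ i' ∧ ∃ l : ℂ,
          (∀ k : Fin 3, M i (e k) = l * M i' (e k)) ∨
          (∀ k : Fin 3, M i' (e k) = l * M i (e k))) ∨
      (∃ k k' : Fin 3, k ≠ k' ∧ ∃ l : ℂ,
          (∀ i : Fin 3, M i (e k) = l * M i (e k')) ∨
          (∀ i : Fin 3, M i (e k') = l * M i (e k)))) :
    (∃ i i' : Fin 3, i ≠ i' ∧ ∃ l : ℂ, ∀ j, M i j = l * M i' j) ∨
    (∃ P : Fin n → Bool, ∀ j j' : Fin n, P j = P j' →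
        ∃ l : ℂ, ∀ i, M i j = l * M i j') := by
  by_cases h3 : ∃ j₁ j₂ j₃, M.cyclicRowRatio j₁ ≠ M.cyclicRowRatio j₂ ∧
      M.cyclicRowRatio j₁ ≠ M.cyclicRowRatio j₃ ∧ M.cyclicRowRatio j₂ ≠ M.cyclicRowRatio j₃
  · obtain ⟨j₁, j₂, j₃, h₁₂, h₁₃, h₂₃⟩ := h3
    obtain ⟨k, hk⟩ := exists_forall_apply_eq_of_triples M.cyclicRowRatio
      (fun _ _ _ _ => cyclicRowRatio_eq_of_eq_of_eq hM)
      (fun _ _ _ => exists_cyclicRowRatio_eq_of_minors hM h) h₁₂ h₁₃ h₂₃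
    refine Or.inl ⟨k, k + 1, (by decide : ∀ k : Fin 3, k ≠ k + 1) k, M.cyclicRowRatio j₁ k,
      fun j => ?_⟩
    rw [← hk j, cyclicRowRatio, div_mul_cancel₀ _ (hM _ _)]
  · push Not at h3
    obtain ⟨P, hP⟩ := exists_two_classes_of_no_three_distinct M.cyclicRowRatio h3
    exact Or.inr ⟨P, fun j j' hjj' => (cyclicRowRatio_eq_iff hM).1 (hP j j' hjj')⟩
end

section
/- Let B ⊂ ℤ be finite with |B| ≥ 2, and let x, y, z be nonzero complex numbers. The 3×|B| matrix with rows (x^b)_{b∈B}, (y^b)_{b∈B}, (z^b)_{b∈B} has rank 1 (i.e., corank 2 among its 3 rows when |B| ≥ 3, meaning all 2×2 minors vanish) if and only if y/x and z/x are both k-th roots of unity for k = φ(B), the gcd of all differences of elements of B. In particular, if additionally x, y, z are pairwise distinct, such a configuration exists if and only if φ(B) ≥ 3. -/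
/-!
The minor `x ^ a * y ^ b - x ^ b * y ^ a` vanishes iff `(y / x) ^ (b - a) = 1`. The exponents `n`
with `w ^ n = 1` form the ideal `(orderOf w) ℤ`, so `w ^ (b - a) = 1` for all `a, b ∈ B` iff
`orderOf w ∣ φ(B)`, i.e. iff `w ^ φ(B) = 1`. The `(y, z)` minors then vanish for free, since
`z / y = (z / x) / (y / x)`. For pairwise distinct `x, y, z`, the numbers `1, y / x, z / x` are
three distinct `φ(B)`-th roots of unity, of which `ℂ` has exactly `φ(B)`; conversely `1, ζ, ζ ^ 2`
works for a primitive `φ(B)`-th root of unity `ζ`.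
-/

noncomputable def phiSet (B : Finset ℤ) : ℤ :=
  (B ×ˢ B).gcd (fun p => p.2 - p.1)

open Polynomial

theorem phiSet_nonneg (B : Finset ℤ) : 0 ≤ phiSet B := by
  rw [phiSet, ← Finset.normalize_gcd, ← Int.abs_eq_normalize]
  exact abs_nonneg _

theorem phiSet_pos {B : Finset ℤ} (hB : 1 < B.card) : 0 < phiSet B := by
  obtain ⟨a, ha, b, hb, hab⟩ := Finset.one_lt_card.mp hB
  refine (phiSet_nonneg B).lt_of_ne' fun h ↦ hab ?_
  have := Finset.gcd_eq_zero_iff.mp h (a, b) (Finset.mem_product.mpr ⟨ha, hb⟩)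
  omega

theorem zpow_phiSet_eq_one_iff {G₀ : Type*} [GroupWithZero G₀] {w : G₀} (hw : w ≠ 0)
    (B : Finset ℤ) : w ^ phiSet B = 1 ↔ ∀ a ∈ B, ∀ b ∈ B, w ^ (b - a) = 1 := by
  obtain ⟨u, rfl⟩ := hw.isUnit
  simp only [← Units.val_zpow_eq_zpow_val, Units.val_eq_one, ← orderOf_dvd_iff_zpow_eq_one,
    phiSet, Finset.dvd_gcd_iff, Finset.mem_product, Prod.forall, and_imp]
  exact ⟨fun h a ha b hb ↦ h a b ha hb, fun h a b ha hb ↦ h a ha b hb⟩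

theorem zpow_mul_zpow_eq_iff {K : Type*} [Field K] {x y : K} (hx : x ≠ 0) (hy : y ≠ 0)
    (a b : ℤ) : x ^ a * y ^ b = x ^ b * y ^ a ↔ (y / x) ^ (b - a) = 1 := by
  rw [div_zpow, div_eq_one_iff_eq (zpow_ne_zero _ hx), zpow_sub₀ hy, zpow_sub₀ hx,
    div_eq_div_iff (zpow_ne_zero _ hy) (zpow_ne_zero _ hx)]
  constructor <;> intro h <;> linear_combination h

def MinorsVanish {K : Type*} [Field K] (B : Finset ℤ) (x y : K) : Prop :=
  ∀ a ∈ B, ∀ b ∈ B, x ^ a * y ^ b = x ^ b * y ^ a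

theorem minorsVanish_iff {K : Type*} [Field K] (B : Finset ℤ) {x y : K} (hx : x ≠ 0)
    (hy : y ≠ 0) :
    MinorsVanish B x y ↔ (y / x) ^ phiSet B = 1 := by
  simp only [MinorsVanish, zpow_mul_zpow_eq_iff hx hy,
    zpow_phiSet_eq_one_iff (div_ne_zero hy hx)]

theorem three_le_iff_exists_zpow_eq_one {k : ℤ} (hk : 0 < k) :
    3 ≤ k ↔ ∃ v w : ℂ, v ≠ 1 ∧ w ≠ 1 ∧ v ≠ w ∧ v ^ k = 1 ∧ w ^ k = 1 := by
  lift k to ℕ using hk.le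
  have hk₀ : 0 < k := by exact_mod_cast hk
  set ζ := Complex.exp (2 * Real.pi * Complex.I / k)
  have hζ : IsPrimitiveRoot ζ k := Complex.isPrimitiveRoot_exp k hk₀.ne'
  simp only [zpow_natCast, Nat.ofNat_le_cast]
  constructor
  · intro hk3
    have hne {i j : ℕ} (hi : i < k) (hj : j < k) (hij : i ≠ j) : ζ ^ i ≠ ζ ^ j :=
      fun h ↦ hij (hζ.pow_inj hi hj h)
    have hroot (i : ℕ) : (ζ ^ i) ^ k = 1 := by rw [pow_right_comm, hζ.pow_eq_one, one_pow]
    exact ⟨ζ ^ 1, ζ ^ 2, by simpa using hne (j := 0) (by omega) hk₀ one_ne_zero,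
      by simpa using hne (j := 0) (by omega) hk₀ two_ne_zero,
      hne (by omega) (by omega) (by decide), hroot 1, hroot 2⟩
  · rintro ⟨v, w, hv₁, hw₁, hvw, hv, hw⟩
    have hsub : ({1, v, w} : Finset ℂ) ⊆ nthRootsFinset k (1 : ℂ) := by
      simp [Finset.insert_subset_iff, mem_nthRootsFinset hk₀, hv, hw]
    calc 3 = ({1, v, w} : Finset ℂ).card := by
          rw [Finset.card_insert_of_notMem (by simp [hv₁.symm, hw₁.symm]), Finset.card_pair hvw]
      _ ≤ (nthRootsFinset k (1 : ℂ)).card := Finset.card_le_card hsub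
      _ = k := hζ.card_nthRootsFinset

theorem minorsVanish_three_rows_iff {K : Type*} [Field K] (B : Finset ℤ) {x y z : K}
    (hx : x ≠ 0) (hy : y ≠ 0) (hz : z ≠ 0) :
    (∀ a ∈ B, ∀ b ∈ B,
        x ^ a * y ^ b = x ^ b * y ^ a ∧
        x ^ a * z ^ b = x ^ b * z ^ a ∧
        y ^ a * z ^ b = y ^ b * z ^ a) ↔
      (y / x) ^ phiSet B = 1 ∧ (z / x) ^ phiSet B = 1 := by
  simp only [imp_and, forall_and]
  change MinorsVanish B x y ∧ MinorsVanish B x z ∧ MinorsVanish B y z ↔ _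
  rw [minorsVanish_iff B hx hy, minorsVanish_iff B hx hz, minorsVanish_iff B hy hz,
    ← div_div_div_cancel_right₀ hx z y, div_zpow (z / x)]
  exact ⟨fun h ↦ ⟨h.1, h.2.1⟩, fun ⟨h₁, h₂⟩ ↦ ⟨h₁, h₂, by rw [h₁, h₂, div_one]⟩⟩

theorem stmt_5 (B : Finset ℤ) (hB : 2 ≤ B.card) :
    (∀ x y z : ℂ, x ≠ 0 → y ≠ 0 → z ≠ 0 →
      ((∀ a ∈ B, ∀ b ∈ B,
          x ^ a * y ^ b = x ^ b * y ^ a ∧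
          x ^ a * z ^ b = x ^ b * z ^ a ∧
          y ^ a * z ^ b = y ^ b * z ^ a) ↔
        ((y / x) ^ phiSet B = 1 ∧ (z / x) ^ phiSet B = 1))) ∧
    ((∃ x y z : ℂ, x ≠ 0 ∧ y ≠ 0 ∧ z ≠ 0 ∧ x ≠ y ∧ x ≠ z ∧ y ≠ z ∧
        ∀ a ∈ B, ∀ b ∈ B,
          x ^ a * y ^ b = x ^ b * y ^ a ∧
          x ^ a * z ^ b = x ^ b * z ^ a ∧
          y ^ a * z ^ b = y ^ b * z ^ a) ↔
      3 ≤ phiSet B) := by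
  have hφ := phiSet_pos hB
  refine ⟨fun x y z hx hy hz ↦ minorsVanish_three_rows_iff B hx hy hz, ?_⟩
  rw [three_le_iff_exists_zpow_eq_one hφ]
  constructor
  · rintro ⟨x, y, z, hx, hy, hz, hxy, hxz, hyz, h⟩
    obtain ⟨hy₁, hz₁⟩ := (minorsVanish_three_rows_iff B hx hy hz).mp h
    refine ⟨y / x, z / x, ?_, ?_, ?_, hy₁, hz₁⟩
    · rwa [Ne, div_eq_one_iff_eq hx, eq_comm]
    · rwa [Ne, div_eq_one_iff_eq hx, eq_comm]
    · rwa [Ne, div_left_inj' hx]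
  · rintro ⟨v, w, hv₁, hw₁, hvw, hv, hw⟩
    have ne_zero_of_root {u : ℂ} (hu : u ^ phiSet B = 1) : u ≠ 0 := by
      rintro rfl
      simp [zero_zpow _ hφ.ne'] at hu
    have hv₀ := ne_zero_of_root hv
    have hw₀ := ne_zero_of_root hw
    refine ⟨1, v, w, one_ne_zero, hv₀, hw₀, hv₁.symm, hw₁.symm, hvw,
      (minorsVanish_three_rows_iff B one_ne_zero hv₀ hw₀).mpr ?_⟩
    simpa using ⟨hv, hw⟩
end

section
/- Let p, q ∈ ℂ[t,u] be nonzero polynomials in two variables. The Newton polygon of the product pq equals the Minkowski sum of the Newton polygons of p and q: N_{pq} = N_p + N_q, where N_f is the convex hull in ℝ² of the exponent vectors of monomials appearing in f with nonzero coefficient, and A + B = {a + b : a ∈ A, b ∈ B}. -/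
open MvPolynomial
open scoped Pointwise

/-!
A linear functional `ℓ` is maximised on `N_p + N_q` at `a + b`, where `a` and `b` are maximisers
on the exponents of `p` and of `q`. Breaking ties among maximisers lexicographically, the
coefficient of `x^(a+b)` in `pq` is the single product `p_a q_b ≠ 0`, so the maximum of `ℓ` over
`N_pq` is at least that over `N_p + N_q`. Since `N_pq ⊆ N_p + N_q` trivially, Hahn–Banach
separation gives equality.
-/

section Convex

variable {𝕜 E β : Type*} [Field 𝕜] [LinearOrder 𝕜] [IsStrictOrderedRing 𝕜] [AddCommGroup E]
  [Module 𝕜 E] [AddCommGroup β] [LinearOrder β] [IsOrderedAddMonoid β] [Module 𝕜 β]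
  [IsStrictOrderedModule 𝕜 β]

theorem IsMaxOn.convexHull {s t : Set E} {f : E → β} {a : E} (hf : ConvexOn 𝕜 t f)
    (hst : s ⊆ t) (h : IsMaxOn f s a) : IsMaxOn f (convexHull 𝕜 s) a := fun _ hx ↦
  let ⟨_, hy, hxy⟩ := hf.exists_ge_of_mem_convexHull hst hx
  hxy.trans (h hy)

end Convex

section Separation

variable {E : Type*} [TopologicalSpace E] [AddCommGroup E] [Module ℝ E] [IsTopologicalAddGroup E]
  [ContinuousSMul ℝ E] [LocallyConvexSpace ℝ E] [T2Space E]

theorem convexHull_eq_add_of_forall_exists_isMaxOn {s t u : Set E} (hu : u.Finite)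
    (hust : u ⊆ s + t)
    (hmax : ∀ ℓ : E →L[ℝ] ℝ, ∃ a b, IsMaxOn ℓ s a ∧ IsMaxOn ℓ t b ∧ a + b ∈ u) :
    convexHull ℝ u = convexHull ℝ s + convexHull ℝ t := by
  refine subset_antisymm ((convexHull_mono hust).trans (convexHull_add s t).le) fun v hv ↦ ?_
  by_contra hvu
  obtain ⟨ℓ, r, hlt, hgt⟩ := geometric_hahn_banach_closed_point (convex_convexHull ℝ u)
    (hu.isCompact_convexHull ℝ).isClosed hvu
  obtain ⟨a, b, ha, hb, hab⟩ := hmax ℓ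
  obtain ⟨y, hy, z, hz, rfl⟩ := hv
  have hℓ : ConvexOn ℝ Set.univ ℓ := (ℓ : E →ₗ[ℝ] ℝ).convexOn convex_univ
  have hy' : ℓ y ≤ ℓ a := ha.convexHull hℓ (Set.subset_univ s) hy
  have hz' : ℓ z ≤ ℓ b := hb.convexHull hℓ (Set.subset_univ t) hz
  have hab' : ℓ (a + b) < r := hlt _ (subset_convexHull ℝ u hab)
  rw [map_add] at hab' hgt
  linarith

end Separation

section Polynomial

variable {R σ B : Type*} [CommSemiring R] [AddCommMonoid B] [LinearOrder B]
  [IsOrderedCancelAddMonoid B]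

theorem MvPolynomial.coeff_add_mul_of_isMaxOn {D : (σ →₀ ℕ) → B} (hD : D.Injective)
    (hadd : ∀ x y, D (x + y) = D x + D y) {p q : MvPolynomial σ R} {a b : σ →₀ ℕ}
    (ha : IsMaxOn D p.support a) (hb : IsMaxOn D q.support b) :
    coeff (a + b) (p * q) = coeff a p * coeff b q := by
  classical
  rw [coeff_mul]
  refine Finset.sum_eq_single_of_mem (a, b) (Finset.HasAntidiagonal.mem_antidiagonal.mpr rfl) ?_
  rintro ⟨x, y⟩ hxy hne
  have hxy : x + y = a + b := Finset.HasAntidiagonal.mem_antidiagonal.mp hxy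
  by_contra hcoeff
  have hx : D x ≤ D a := ha (mem_support_iff.mpr (left_ne_zero_of_mul hcoeff))
  have hy : D y ≤ D b := hb (mem_support_iff.mpr (right_ne_zero_of_mul hcoeff))
  obtain rfl | hxa := eq_or_ne x a
  · exact hne (by rw [add_left_cancel hxy])
  · have := add_lt_add_of_lt_of_le (hx.lt_of_ne (hD.ne hxa)) hy
    rw [← hadd, ← hadd, hxy] at this
    exact this.false

theorem MvPolynomial.exists_isMaxOn_add_mem_support_mul [NoZeroDivisors R] [LinearOrder σ]
    (f : (σ →₀ ℕ) →+ B) {p q : MvPolynomial σ R} (hp : p ≠ 0) (hq : q ≠ 0) :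
    ∃ a ∈ p.support, ∃ b ∈ q.support,
      IsMaxOn f p.support a ∧ IsMaxOn f q.support b ∧ a + b ∈ (p * q).support := by
  let D : (σ →₀ ℕ) → B ×ₗ Lex (σ →₀ ℕ) := fun d ↦ toLex (f d, toLex d)
  have hD : D.Injective := fun x y h ↦
    congrArg (fun z : B ×ₗ Lex (σ →₀ ℕ) ↦ ofLex (ofLex z).2) h
  have hadd : ∀ x y, D (x + y) = D x + D y := fun x y ↦ by simp only [D, map_add]; rfl
  have hmax : ∀ {r : MvPolynomial σ R}, r ≠ 0 →
      ∃ a ∈ r.support, IsMaxOn D r.support a ∧ IsMaxOn f r.support a := fun {r} hr ↦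
    let ⟨a, ha, hmax⟩ := r.support.exists_max_image D (support_nonempty.mpr hr)
    ⟨a, ha, hmax, fun x hx ↦ Prod.Lex.monotone_fst_ofLex (hmax x hx)⟩
  obtain ⟨a, ha, haD, haf⟩ := hmax hp
  obtain ⟨b, hb, hbD, hbf⟩ := hmax hq
  refine ⟨a, ha, b, hb, haf, hbf, ?_⟩
  rw [mem_support_iff, coeff_add_mul_of_isMaxOn hD hadd haD hbD]
  exact mul_ne_zero (mem_support_iff.mp ha) (mem_support_iff.mp hb)

end Polynomial

theorem MvPolynomial.convexHull_image_support_mul {R σ E : Type*} [CommSemiring R]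
    [NoZeroDivisors R] [LinearOrder σ] [TopologicalSpace E] [AddCommGroup E] [Module ℝ E]
    [IsTopologicalAddGroup E] [ContinuousSMul ℝ E] [LocallyConvexSpace ℝ E] [T2Space E]
    (π : (σ →₀ ℕ) →+ E) (p q : MvPolynomial σ R) :
    convexHull ℝ (π '' (p * q).support)
      = convexHull ℝ (π '' p.support) + convexHull ℝ (π '' q.support) := by
  classical
  rcases eq_or_ne p 0 with rfl | hp
  · simp
  rcases eq_or_ne q 0 with rfl | hq
  · simp
  refine convexHull_eq_add_of_forall_exists_isMaxOn ((p * q).support.finite_toSet.image π) ?_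
    fun ℓ ↦ ?_
  · rintro _ ⟨d, hd, rfl⟩
    obtain ⟨x, hx, y, hy, rfl⟩ := Finset.mem_add.mp (support_mul p q hd)
    exact map_add π x y ▸ Set.add_mem_add (Set.mem_image_of_mem π hx) (Set.mem_image_of_mem π hy)
  · obtain ⟨a, -, b, -, haf, hbf, hab⟩ :=
      exists_isMaxOn_add_mem_support_mul ((ℓ : E →+ ℝ).comp π) hp hq
    exact ⟨π a, π b, Set.forall_mem_image.2 fun _ hx ↦ haf hx, Set.forall_mem_image.2 fun _ hx ↦ hbf hx,
      map_add π a b ▸ Set.mem_image_of_mem π hab⟩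

theorem stmt_18_general (p q : MvPolynomial (Fin 2) ℂ) :
    convexHull ℝ
        (↑((p * q).support.image fun d => ((d 0 : ℝ), (d 1 : ℝ))) : Set (ℝ × ℝ))
      = convexHull ℝ (↑(p.support.image fun d => ((d 0 : ℝ), (d 1 : ℝ))) : Set (ℝ × ℝ))
        + convexHull ℝ (↑(q.support.image fun d => ((d 0 : ℝ), (d 1 : ℝ))) : Set (ℝ × ℝ)) := by
  let π : (Fin 2 →₀ ℕ) →+ ℝ × ℝ :=
    ((Nat.castAddMonoidHom ℝ).comp (Finsupp.applyAddHom 0)).prod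
      ((Nat.castAddMonoidHom ℝ).comp (Finsupp.applyAddHom 1))
  simp only [Finset.coe_image]
  exact convexHull_image_support_mul π p q

theorem stmt_18 (p q : MvPolynomial (Fin 2) ℂ) (hp : p ≠ 0) (hq : q ≠ 0) :
    convexHull ℝ
        (↑((p * q).support.image fun d => ((d 0 : ℝ), (d 1 : ℝ))) : Set (ℝ × ℝ))
      = convexHull ℝ (↑(p.support.image fun d => ((d 0 : ℝ), (d 1 : ℝ))) : Set (ℝ × ℝ))
        + convexHull ℝ (↑(q.support.image fun d => ((d 0 : ℝ), (d 1 : ℝ))) : Set (ℝ × ℝ)) :=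
  stmt_18_general p q
end
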